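/- arXiv:2005.03766 — 2 statements merged into one kernel-verified Lean document; each statement's English description precedes it below -/
import Mathlib

section
/- For the sequence generated by I-FISTA, with u_k := t_k(x_k - x_{k-1}) - (τ/L)t_k v_k + (x_{k-1} - x_*) for a fixed minimizer x_*, one has for all k ≥ 1: (2τ/L)[t_k²(F(x_k) - F*) - t_{k+1}²(F(x_{k+1}) - F*)] ≥ ‖u_{k+1}‖² - ‖u_k‖² + (τα t_{k+1}²/L)‖y_{k+1} - x_{k+1}‖². -/
noncomputable section

open InnerProductSpace Set Filter Topology intervalIntegral

/-- The ε-subdifferential of an extended-real-valued function `g` at `x`: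
`∂_ε g(x) = {u | ∀ z, g z ≥ g x + ⟨u, z - x⟩ - ε}`. -/
def epsSubdiff {E : Type*} [NormedAddCommGroup E] [InnerProductSpace ℝ E]
    (g : E → EReal) (ε : ℝ) (x : E) : Set E :=
  {u | ∀ z : E, g x + (((inner ℝ u (z - x) : ℝ) - ε : ℝ) : EReal) ≤ g z}

/-- `g` is proper: it takes a value `< ⊤` somewhere and is never `⊥`. -/
def ProperFn {E : Type*} (g : E → EReal) : Prop :=
  (∃ x, g x ≠ ⊤) ∧ ∀ x, g x ≠ ⊥

/-- Convexity for an extended-real-valued function. -/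
def ConvexFn {E : Type*} [NormedAddCommGroup E] [Module ℝ E] (g : E → EReal) : Prop :=
  ∀ x y : E, ∀ a b : ℝ, 0 ≤ a → 0 ≤ b → a + b = 1 →
    g (a • x + b • y) ≤ (a : EReal) * g x + (b : EReal) * g y

section Helpers

variable {E : Type*} [NormedAddCommGroup E] [InnerProductSpace ℝ E] [FiniteDimensional ℝ E]

lemma line_deriv (f : E → ℝ) (f' : E → E) (hgrad : ∀ p : E, HasGradientAt f (f' p) p)
    (y d : E) (s : ℝ) :
    HasDerivAt (fun s : ℝ => f (y + s • d)) ((inner ℝ (f' (y + s • d)) d : ℝ)) s := by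
  have hline : HasDerivAt (fun s : ℝ => y + s • d) d s := by
    simpa using ((hasDerivAt_id s).smul_const d).const_add y
  have := ((hgrad (y + s • d)).hasFDerivAt.comp_hasDerivAt s hline)
  simpa [Function.comp_def, InnerProductSpace.toDual_apply_apply] using this

lemma convex_grad_ineq (f : E → ℝ) (f' : E → E) (hconv : ConvexOn ℝ Set.univ f)
    (hgrad : ∀ p : E, HasGradientAt f (f' p) p) (y z : E) :
    f y + (inner ℝ (f' y) (z - y) : ℝ) ≤ f z := by
  set φ : ℝ → ℝ := fun s => f (y + s • (z - y)) with hφ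
  have hφ0 : HasDerivAt φ ((inner ℝ (f' y) (z - y) : ℝ)) 0 := by
    simpa using line_deriv f f' hgrad y (z - y) 0
  have hslope := hasDerivAt_iff_tendsto_slope.mp hφ0
  have hsub : Ioi (0:ℝ) ⊆ {(0:ℝ)}ᶜ := fun a ha => ne_of_gt ha
  have hslope' : Tendsto (slope φ 0) (𝓝[>] (0:ℝ)) (𝓝 ((inner ℝ (f' y) (z - y) : ℝ))) :=
    hslope.mono_left (nhdsWithin_mono 0 hsub)
  have hbound : ∀ᶠ s in 𝓝[>] (0:ℝ), slope φ 0 s ≤ f z - f y := by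
    filter_upwards [Ioo_mem_nhdsGT_of_mem (by constructor <;> norm_num : (0:ℝ) ∈ Ico (0:ℝ) 1)]
      with s hs
    have hs0 : 0 < s := hs.1
    have hs1 : s < 1 := hs.2
    have hcomb : φ s ≤ (1 - s) * f y + s * f z := by
      have h := hconv.2 (mem_univ y) (mem_univ z) (by linarith : (0:ℝ) ≤ 1 - s)
        (le_of_lt hs0) (by ring)
      have heq : (1 - s) • y + s • z = y + s • (z - y) := by
        module
      rw [heq] at h
      simpa [smul_eq_mul] using h
    have hφ0' : φ 0 = f y := by simp [hφ]
    rw [slope_def_field, sub_zero, div_le_iff₀ hs0]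
    nlinarith [hcomb, hφ0']
  have := le_of_tendsto hslope' hbound
  linarith

lemma descent_lemma (L : ℝ) (hL : 0 < L) (f : E → ℝ) (f' : E → E)
    (hgrad : ∀ p : E, HasGradientAt f (f' p) p)
    (hlip : ∀ p q : E, ‖f' p - f' q‖ ≤ L * ‖p - q‖) (x y : E) :
    f x ≤ f y + (inner ℝ (f' y) (x - y) : ℝ) + L / 2 * ‖x - y‖ ^ 2 := by
  set d := x - y with hd
  have hcont : Continuous f' := by
    have : LipschitzWith ⟨L, hL.le⟩ f' := by
      apply LipschitzWith.of_dist_le_mul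
      intro a b
      have h := hlip a b
      rw [← dist_eq_norm, ← dist_eq_norm] at h
      exact h
    exact this.continuous
  have hder : ∀ s : ℝ, HasDerivAt (fun s : ℝ => f (y + s • d))
      ((inner ℝ (f' (y + s • d)) d : ℝ)) s := fun s => line_deriv f f' hgrad y d s
  have hφcont : Continuous fun s : ℝ => (inner ℝ (f' (y + s • d)) d : ℝ) := by
    apply Continuous.inner
    · exact hcont.comp (by continuity)
    · exact continuous_const
  have hftc : ∫ s in (0:ℝ)..1, (inner ℝ (f' (y + s • d)) d : ℝ)
      = f (y + (1:ℝ) • d) - f (y + (0:ℝ) • d) := by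
    exact integral_eq_sub_of_hasDerivAt (fun s _ => hder s) (hφcont.intervalIntegrable 0 1)
  have hmono : ∫ s in (0:ℝ)..1, (inner ℝ (f' (y + s • d)) d : ℝ)
      ≤ ∫ s in (0:ℝ)..1, ((inner ℝ (f' y) d : ℝ) + L * s * ‖d‖ ^ 2) := by
    apply integral_mono_on (by norm_num) (hφcont.intervalIntegrable 0 1)
    · exact (Continuous.intervalIntegrable (by continuity) 0 1)
    · intro s hs
      have hs0 : 0 ≤ s := hs.1
      have h1 : (inner ℝ (f' (y + s • d)) d : ℝ) - (inner ℝ (f' y) d : ℝ)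
          = (inner ℝ (f' (y + s • d) - f' y) d : ℝ) := by rw [inner_sub_left]
      have h2 : (inner ℝ (f' (y + s • d) - f' y) d : ℝ) ≤ ‖f' (y + s • d) - f' y‖ * ‖d‖ :=
        real_inner_le_norm _ _
      have h3 : ‖f' (y + s • d) - f' y‖ ≤ L * (s * ‖d‖) := by
        have := hlip (y + s • d) y
        simpa [norm_smul, abs_of_nonneg hs0] using this
      have h4 : ‖f' (y + s • d) - f' y‖ * ‖d‖ ≤ L * (s * ‖d‖) * ‖d‖ :=
        mul_le_mul_of_nonneg_right h3 (norm_nonneg d)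
      nlinarith [sq_nonneg ‖d‖]
  have hInt : ∫ s in (0:ℝ)..1, ((inner ℝ (f' y) d : ℝ) + L * s * ‖d‖ ^ 2)
      = (inner ℝ (f' y) d : ℝ) + L / 2 * ‖d‖ ^ 2 := by
    rw [integral_add (intervalIntegrable_const) (Continuous.intervalIntegrable (by continuity) 0 1)]
    have h2 : ∫ s in (0:ℝ)..1, L * s * ‖d‖ ^ 2 = L / 2 * ‖d‖ ^ 2 := by
      have he : (fun s : ℝ => L * s * ‖d‖ ^ 2) = fun s : ℝ => (L * ‖d‖ ^ 2) * s := by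
        funext s; ring
      rw [he, integral_const_mul, integral_id]; ring
    rw [h2]; simp
  have h1 : f (y + (1:ℝ) • d) = f x := by simp [hd]
  have h0 : f (y + (0:ℝ) • d) = f y := by simp
  linarith [hmono, hftc.symm.le, hInt.le]

lemma key_identity (T : ℝ) (a b : E) :
    T * ((T - 1) * ‖a‖ ^ 2 + ‖b‖ ^ 2) = ‖(T - 1) • a + b‖ ^ 2 + (T - 1) * ‖a - b‖ ^ 2 := by
  have h1 : ‖(T - 1) • a + b‖ ^ 2
      = ‖(T-1) • a‖ ^ 2 + 2 * (inner ℝ ((T-1) • a) b : ℝ) + ‖b‖ ^ 2 := norm_add_sq_real _ _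
  have h2 : ‖a - b‖ ^ 2 = ‖a‖ ^ 2 - 2 * (inner ℝ a b : ℝ) + ‖b‖ ^ 2 := norm_sub_sq_real _ _
  have h3 : ‖(T-1) • a‖ ^ 2 = (T-1) ^ 2 * ‖a‖ ^ 2 := by
    rw [norm_smul]; simp [mul_pow, sq_abs]
  have h4 : (inner ℝ ((T-1) • a) b : ℝ) = (T-1) * (inner ℝ a b : ℝ) := real_inner_smul_left _ _ _
  rw [h1, h2, h3, h4]; ring

lemma onestep (L τ α : ℝ) (hL : 0 < L) (hτ0 : 0 < τ)
    (f : E → ℝ) (f' : E → E)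
    (hconvi : ∀ p q : E, f p + (inner ℝ (f' p) (q - p) : ℝ) ≤ f q)
    (hdesc : ∀ p q : E, f p ≤ f q + (inner ℝ (f' q) (p - q) : ℝ) + L / 2 * ‖p - q‖ ^ 2)
    (g : E → EReal) (X Y V : E) (e : ℝ)
    (hincl : V - (L / τ) • (X - Y) - f' Y ∈ epsSubdiff g e X)
    (herr : ‖τ • V‖ ^ 2 + 2 * τ * e * L ≤ L * ((1 - τ) * L - α * τ) * ‖X - Y‖ ^ 2)
    (GX : ℝ) (hGX : g X = (GX : EReal))
    (z : E) (c : ℝ) (hc : g z = (c : EReal)) :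
    ‖z - X + (τ / L) • V‖ ^ 2 - ‖z - Y‖ ^ 2 + τ * α / L * ‖X - Y‖ ^ 2
      ≤ 2 * τ / L * ((f z + c) - (f X + GX)) := by
  set w : E := V - (L / τ) • (X - Y) - f' Y with hw
  have h1 : GX + ((inner ℝ w (z - X) : ℝ) - e) ≤ c := by
    have := hincl z
    rw [hGX, hc, ← EReal.coe_add, EReal.coe_le_coe_iff] at this
    exact this
  have hwz : (inner ℝ w (z - X) : ℝ)
      = (inner ℝ V (z - X) : ℝ) - (L / τ) * (inner ℝ (X - Y) (z - X) : ℝ)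
        - (inner ℝ (f' Y) (z - X) : ℝ) := by
    rw [hw, inner_sub_left, inner_sub_left, real_inner_smul_left]
  have h2 : f Y + (inner ℝ (f' Y) (z - Y) : ℝ) ≤ f z := hconvi Y z
  have h2' : (inner ℝ (f' Y) (z - Y) : ℝ)
      = (inner ℝ (f' Y) (z - X) : ℝ) + (inner ℝ (f' Y) (X - Y) : ℝ) := by
    rw [← inner_add_right]; congr 1; abel
  have h3 : f X ≤ f Y + (inner ℝ (f' Y) (X - Y) : ℝ) + L / 2 * ‖X - Y‖ ^ 2 := hdesc X Y
  have herr' : τ ^ 2 * ‖V‖ ^ 2 + 2 * τ * e * L ≤ L * ((1 - τ) * L - α * τ) * ‖X - Y‖ ^ 2 := by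
    have : ‖τ • V‖ ^ 2 = τ ^ 2 * ‖V‖ ^ 2 := by
      rw [norm_smul]; rw [mul_pow, Real.norm_eq_abs, sq_abs]
    linarith [herr, this.symm.le, this.le]
  have h5 : (inner ℝ V (z - X) : ℝ) - (L / τ) * (inner ℝ (X - Y) (z - X) : ℝ) - e
      - L / 2 * ‖X - Y‖ ^ 2 ≤ (f z + c) - (f X + GX) := by
    linarith [h1, h2, h3, hwz.le, hwz.symm.le, h2'.le, h2'.symm.le]
  have e1 : ‖z - X + (τ / L) • V‖ ^ 2
      = ‖z - X‖ ^ 2 + 2 * ((τ / L) * (inner ℝ (z - X) V : ℝ)) + (τ / L) ^ 2 * ‖V‖ ^ 2 := by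
    rw [norm_add_sq_real, real_inner_smul_right, norm_smul]
    rw [mul_pow, Real.norm_eq_abs, sq_abs]
  have e2 : ‖z - Y‖ ^ 2 = ‖z - X‖ ^ 2 + 2 * (inner ℝ (z - X) (X - Y) : ℝ) + ‖X - Y‖ ^ 2 := by
    have : z - Y = (z - X) + (X - Y) := by abel
    rw [this, norm_add_sq_real]
  set a1 : ℝ := (inner ℝ V (z - X) : ℝ) with ha1
  set a2 : ℝ := (inner ℝ (X - Y) (z - X) : ℝ) with ha2
  have c1 : (inner ℝ (z - X) V : ℝ) = a1 := real_inner_comm _ _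
  have c2 : (inner ℝ (z - X) (X - Y) : ℝ) = a2 := real_inner_comm _ _
  rw [e1, e2, c1, c2]
  have hL' : L ≠ 0 := ne_of_gt hL
  have hτ' : τ ≠ 0 := ne_of_gt hτ0
  have h6 : 2 * τ / L * ((inner ℝ V (z - X) : ℝ) - (L / τ) * a2 - e - L / 2 * ‖X - Y‖ ^ 2)
      ≤ 2 * τ / L * ((f z + c) - (f X + GX)) := by
    apply mul_le_mul_of_nonneg_left h5 (by positivity)
  have h7 : 2 * τ / L * ((inner ℝ V (z - X) : ℝ) - (L / τ) * a2 - e - L / 2 * ‖X - Y‖ ^ 2)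
      = 2 * τ / L * a1 - 2 * a2 - 2 * τ / L * e - τ * ‖X - Y‖ ^ 2 := by
    rw [← ha1]; field_simp
  have h8 : (τ / L) ^ 2 * ‖V‖ ^ 2 + 2 * τ / L * e ≤ (1 - τ - τ * α / L) * ‖X - Y‖ ^ 2 := by
    have hL2 : (0:ℝ) < L ^ 2 := by positivity
    rw [← mul_le_mul_iff_of_pos_right hL2]
    calc ((τ / L) ^ 2 * ‖V‖ ^ 2 + 2 * τ / L * e) * L ^ 2
        = τ ^ 2 * ‖V‖ ^ 2 + 2 * τ * e * L := by field_simp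
      _ ≤ L * ((1 - τ) * L - α * τ) * ‖X - Y‖ ^ 2 := herr'
      _ = (1 - τ - τ * α / L) * ‖X - Y‖ ^ 2 * L ^ 2 := by field_simp
  rw [← ha1] at h6 h7
  clear_value a1 a2
  rw [h7] at h6
  set D : ℝ := ‖X - Y‖ ^ 2 with hD
  have h8' : (τ / L) ^ 2 * ‖V‖ ^ 2 + 2 * τ / L * e ≤ D - τ * D - τ * α / L * D := by
    have hrw : (1 - τ - τ * α / L) * D = D - τ * D - τ * α / L * D := by ring
    linarith [h8, hrw.le, hrw.ge]
  have hsum := add_le_add h6 h8'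
  have he : 2 * τ / L * a1 - 2 * a2 - 2 * τ / L * e - τ * D
        + ((τ / L) ^ 2 * ‖V‖ ^ 2 + 2 * τ / L * e)
      = (‖z - X‖ ^ 2 + 2 * (τ / L * a1) + (τ / L) ^ 2 * ‖V‖ ^ 2
          - (‖z - X‖ ^ 2 + 2 * a2 + D) + τ * α / L * D)
        + (D - τ * D - τ * α / L * D) := by ring
  linarith [hsum, he.le, he.ge]

end Helpers

/-- Key recursion for I-FISTA (Theorem 4.3): with
`u k = t k • (x k - x (k-1)) - ((τ/L) t k) • v k + (x (k-1) - x_*)`, one has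
`(2τ/L)[t k² (F(x k) - F*) - t (k+1)² (F(x (k+1)) - F*)]
  ≥ ‖u (k+1)‖² - ‖u k‖² + (τ α t (k+1)²/L) ‖y (k+1) - x (k+1)‖²`. -/
theorem IFISTA_key_recursion {E : Type*} [NormedAddCommGroup E] [InnerProductSpace ℝ E]
    [FiniteDimensional ℝ E]
    (L τ α : ℝ) (hL : 0 < L) (hτ : 0 < τ ∧ τ ≤ 1) (hα : 0 ≤ α ∧ α ≤ L * (1 - τ) / τ)
    (f : E → ℝ) (f' : E → E) (hfconv : ConvexOn ℝ Set.univ f)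
    (hgrad : ∀ x : E, HasGradientAt f (f' x) x)
    (hlip : ∀ x y : E, ‖f' x - f' y‖ ≤ L * ‖x - y‖)
    (g : E → EReal) (hgp : ProperFn g) (hglsc : LowerSemicontinuous g) (hgconv : ConvexFn g)
    (x y v : ℕ → E) (ε t : ℕ → ℝ)
    (ht1 : t 1 = 1) (hy1 : y 1 = x 0)
    (htrec : ∀ k : ℕ, 1 ≤ k → t (k + 1) = (1 + Real.sqrt (1 + 4 * t k ^ 2)) / 2)
    (hεk : ∀ k : ℕ, 1 ≤ k → 0 ≤ ε k)
    (hincl : ∀ k : ℕ, 1 ≤ k →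
        v k - (L / τ) • (x k - y k) - f' (y k) ∈ epsSubdiff g (ε k) (x k))
    (herr : ∀ k : ℕ, 1 ≤ k →
        ‖τ • v k‖ ^ 2 + 2 * τ * ε k * L ≤ L * ((1 - τ) * L - α * τ) * ‖x k - y k‖ ^ 2)
    (hyrec : ∀ k : ℕ, 1 ≤ k →
        y (k + 1) = x k - ((t k / t (k + 1)) * (τ / L)) • v k
          + ((t k - 1) / t (k + 1)) • (x k - x (k - 1)))
    (xstar : E) (Fstar : ℝ)
    (hmin : ∀ z : E, (Fstar : EReal) ≤ (f z : EReal) + g z)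
    (hstar : (f xstar : EReal) + g xstar = (Fstar : EReal))
    (u : ℕ → E)
    (hu : ∀ k : ℕ, u k = t k • (x k - x (k - 1)) - ((τ / L) * t k) • v k + (x (k - 1) - xstar))
    (hfin : ∀ k : ℕ, 1 ≤ k → g (x k) ≠ ⊤) :
    ∀ k : ℕ, 1 ≤ k →
      ‖u (k + 1)‖ ^ 2 - ‖u k‖ ^ 2 + τ * α * t (k + 1) ^ 2 / L * ‖y (k + 1) - x (k + 1)‖ ^ 2
        ≤ 2 * τ / L *
          (t k ^ 2 * (((f (x k) : EReal) + g (x k)).toReal - Fstar)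
            - t (k + 1) ^ 2 * (((f (x (k + 1)) : EReal) + g (x (k + 1))).toReal - Fstar)) := by
  intro k hk
  have hτ0 := hτ.1
  have hL' : L ≠ 0 := ne_of_gt hL
  have hτ' : τ ≠ 0 := ne_of_gt hτ0
  have hconvi : ∀ p q : E, f p + (inner ℝ (f' p) (q - p) : ℝ) ≤ f q :=
    fun p q => convex_grad_ineq f f' hfconv hgrad p q
  have hdesc : ∀ p q : E, f p ≤ f q + (inner ℝ (f' q) (p - q) : ℝ) + L / 2 * ‖p - q‖ ^ 2 :=
    fun p q => descent_lemma L hL f f' hgrad hlip p q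
  -- finiteness of g at iterates and at xstar
  have hGk : g (x k) = (((g (x k)).toReal : ℝ) : EReal) :=
    (EReal.coe_toReal (hfin k hk) (hgp.2 _)).symm
  have hj1 : 1 ≤ k + 1 := by omega
  have hGj : g (x (k + 1)) = (((g (x (k + 1))).toReal : ℝ) : EReal) :=
    (EReal.coe_toReal (hfin (k + 1) hj1) (hgp.2 _)).symm
  set Gk : ℝ := (g (x k)).toReal
  set Gj : ℝ := (g (x (k + 1))).toReal
  have hgsne : g xstar ≠ ⊤ := by
    intro h
    rw [h] at hstar
    simp [EReal.add_top_iff_ne_bot] at hstar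
  have hGs : g xstar = (((g xstar).toReal : ℝ) : EReal) :=
    (EReal.coe_toReal hgsne (hgp.2 _)).symm
  set Gs : ℝ := (g xstar).toReal
  have hFs : f xstar + Gs = Fstar := by
    rw [hGs, ← EReal.coe_add, EReal.coe_eq_coe_iff] at hstar
    exact hstar
  -- properties of T = t (k+1)
  set T : ℝ := t (k + 1) with hTdef
  have hT : T = (1 + Real.sqrt (1 + 4 * t k ^ 2)) / 2 := htrec k hk
  have hsnn : (0:ℝ) ≤ 1 + 4 * t k ^ 2 := by positivity
  have hs2 : Real.sqrt (1 + 4 * t k ^ 2) ^ 2 = 1 + 4 * t k ^ 2 := Real.sq_sqrt hsnn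
  have hs1 : 1 ≤ Real.sqrt (1 + 4 * t k ^ 2) := by
    have h := Real.sqrt_le_sqrt (show (1:ℝ) ≤ 1 + 4 * t k ^ 2 by nlinarith [sq_nonneg (t k)])
    rwa [Real.sqrt_one] at h
  have hT1 : 1 ≤ T := by rw [hT]; linarith
  have hT0 : 0 < T := by linarith
  have hTsq : T ^ 2 - T = t k ^ 2 := by rw [hT]; nlinarith [hs2]
  -- the two instances of the one-step inequality at index k+1
  have I1 := onestep L τ α hL hτ0 f f' hconvi hdesc g (x (k+1)) (y (k+1)) (v (k+1)) (ε (k+1))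
    (hincl (k+1) hj1) (herr (k+1) hj1) Gj hGj (x k) Gk hGk
  have I2 := onestep L τ α hL hτ0 f f' hconvi hdesc g (x (k+1)) (y (k+1)) (v (k+1)) (ε (k+1))
    (hincl (k+1) hj1) (herr (k+1) hj1) Gj hGj xstar Gs hGs
  -- vector abbreviations
  set A : E := x k - x (k+1) + (τ / L) • v (k+1) with hA
  set B : E := xstar - x (k+1) + (τ / L) • v (k+1) with hB
  set A' : E := x k - y (k+1) with hA'
  set B' : E := xstar - y (k+1) with hB'
  have hAB : A - B = x k - xstar := by rw [hA, hB]; abel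
  have hAB' : A' - B' = x k - xstar := by rw [hA', hB']; abel
  -- u (k+1) identity
  have huj : (T - 1) • A + B = -(u (k + 1)) := by
    have h := hu (k + 1)
    simp only [Nat.add_sub_cancel] at h
    rw [h, hA, hB, ← hTdef]
    module
  -- u k identity
  have hTy : T • y (k + 1) = T • x k - (t k * (τ / L)) • v k + (t k - 1) • (x k - x (k - 1)) := by
    rw [hyrec k hk, ← hTdef, smul_add, smul_sub, smul_smul, smul_smul]
    have e1 : T * (t k / T * (τ / L)) = t k * (τ / L) := by field_simp
    have e2 : T * ((t k - 1) / T) = t k - 1 := by field_simp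
    rw [e1, e2]
  have huk : (T - 1) • A' + B' = -(u k) := by
    have step : (T - 1) • A' + B' = (T - 1) • x k + xstar - T • y (k + 1) := by
      rw [hA', hB']; module
    rw [step, hTy, hu k]
    module
  -- norms
  have nuj : ‖(T - 1) • A + B‖ ^ 2 = ‖u (k + 1)‖ ^ 2 := by rw [huj, norm_neg]
  have nuk : ‖(T - 1) • A' + B'‖ ^ 2 = ‖u k‖ ^ 2 := by rw [huk, norm_neg]
  have K1 : T * ((T - 1) * ‖A‖ ^ 2 + ‖B‖ ^ 2)
      = ‖u (k + 1)‖ ^ 2 + (T - 1) * ‖x k - xstar‖ ^ 2 := by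
    rw [key_identity T A B, nuj, hAB]
  have K2 : T * ((T - 1) * ‖A'‖ ^ 2 + ‖B'‖ ^ 2)
      = ‖u k‖ ^ 2 + (T - 1) * ‖x k - xstar‖ ^ 2 := by
    rw [key_identity T A' B', nuk, hAB']
  -- scalar combination
  set c0 : ℝ := τ * α / L * ‖x (k+1) - y (k+1)‖ ^ 2 with hc0
  set Fk' : ℝ := f (x k) + Gk with hFk'
  set Fj' : ℝ := f (x (k+1)) + Gj with hFj'
  have I2' : ‖B‖ ^ 2 - ‖B'‖ ^ 2 + c0 ≤ 2 * τ / L * (Fstar - Fj') := by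
    rw [hFs] at I2
    exact I2
  have I1' : ‖A‖ ^ 2 - ‖A'‖ ^ 2 + c0 ≤ 2 * τ / L * (Fk' - Fj') := I1
  have hgoalk : ((f (x k) : EReal) + g (x k)).toReal = Fk' := by
    rw [hGk, ← EReal.coe_add, EReal.toReal_coe, hFk']
  have hgoalj : ((f (x (k+1)) : EReal) + g (x (k+1))).toReal = Fj' := by
    rw [hGj, ← EReal.coe_add, EReal.toReal_coe, hFj']
  rw [hgoalk, hgoalj]
  have hnrm : ‖y (k+1) - x (k+1)‖ ^ 2 = ‖x (k+1) - y (k+1)‖ ^ 2 := by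
    rw [norm_sub_rev]
  -- multiply and add
  have J1 := mul_le_mul_of_nonneg_left I1' (by linarith : (0:ℝ) ≤ T - 1)
  have J2 := add_le_add J1 I2'
  have J3 := mul_le_mul_of_nonneg_left J2 (le_of_lt hT0)
  have eL : T * ((T - 1) * (‖A‖ ^ 2 - ‖A'‖ ^ 2 + c0) + (‖B‖ ^ 2 - ‖B'‖ ^ 2 + c0))
      = ‖u (k + 1)‖ ^ 2 - ‖u k‖ ^ 2 + T ^ 2 * c0 := by
    have expand : T * ((T - 1) * (‖A‖ ^ 2 - ‖A'‖ ^ 2 + c0) + (‖B‖ ^ 2 - ‖B'‖ ^ 2 + c0))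
        = T * ((T - 1) * ‖A‖ ^ 2 + ‖B‖ ^ 2) - T * ((T - 1) * ‖A'‖ ^ 2 + ‖B'‖ ^ 2)
          + T ^ 2 * c0 := by ring
    rw [expand, K1, K2]; ring
  have eR : T * ((T - 1) * (2 * τ / L * (Fk' - Fj')) + 2 * τ / L * (Fstar - Fj'))
      = 2 * τ / L * (t k ^ 2 * (Fk' - Fstar) - T ^ 2 * (Fj' - Fstar)) := by
    rw [← hTsq]; ring
  have ec : τ * α * T ^ 2 / L * ‖y (k+1) - x (k+1)‖ ^ 2 = T ^ 2 * c0 := by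
    rw [hnrm, hc0]; ring
  rw [ec]
  linarith [J3, eL.le, eL.ge, eR.le, eR.ge]
end
end

section
/- For the sequence generated by IE-FISTA with σ ∈ [0,1) and α > 1/L, the objective gap satisfies F(x̃_k) - F* ≤ 2(1 + αL) d_0² / (α k²) for all k ≥ 1, where d_0 is the distance from x_0 to the solution set. -/
/-!
For every `z` with `F z < ⊤` the energy `τₖ (F x̃ₖ - F z) + ‖xₖ - z‖² / 2` is nonincreasing.
Put `w = v_{k+1} - L (x̃_{k+1} - yₖ)` and `C = L/2 ‖x̃_{k+1} - yₖ‖² + ε_{k+1}`. Convexity and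
the descent lemma for `f`, with the `ε`-subgradient inequality for `g`, give
`F x̃_{k+1} ≤ F u + ⟪w, x̃_{k+1} - u⟫ + C` for `u = z` and `u = x̃ₖ`. The relative error criterion
gives `⟪w, x̃_{k+1} - yₖ⟫ + C ≤ -λ/2 ‖w‖²` with `λ = α / (1 + α L)`, and since
`(τ_{k+1} - τₖ)² = λ τ_{k+1}` this pays for the change of `‖xₖ - z‖² / 2`.
As `τₖ ≥ λ k² / 4`, we get `F x̃ₖ - F z ≤ 2 ‖x₀ - z‖² / (λ k²)`; take the infimum over `z ∈ S_*`.
-/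

noncomputable section

open Set Metric

section Gradient

variable {E : Type*} [NormedAddCommGroup E] [InnerProductSpace ℝ E] [CompleteSpace E]
  {f : E → ℝ}

theorem HasGradientAt.hasDerivAt_comp_add_smul {g y s : E} {t : ℝ}
    (h : HasGradientAt f g (y + t • s)) :
    HasDerivAt (fun t : ℝ => f (y + t • s)) (inner ℝ g s) t := by
  have hline : HasDerivAt (fun t : ℝ => y + t • s) s t := by
    simpa using ((hasDerivAt_id t).smul_const s).const_add y
  exact h.hasFDerivAt.comp_hasDerivAt t hline

theorem ConvexOn.add_inner_gradient_le {g y : E} (hf : ConvexOn ℝ univ f)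
    (hg : HasGradientAt f g y) (z : E) :
    f y + inner ℝ g (z - y) ≤ f z := by
  have hline : (fun t : ℝ => f (y + t • (z - y))) = f ∘ AffineMap.lineMap y z := by
    funext t
    rw [Function.comp_apply, AffineMap.lineMap_apply_module', add_comm]
  have hconvex : ConvexOn ℝ univ (fun t : ℝ => f (y + t • (z - y))) := by
    simpa only [hline, preimage_univ] using hf.comp_affineMap (AffineMap.lineMap y z)
  have hslope := hconvex.le_slope_of_hasDerivAt (mem_univ 0) (mem_univ 1) one_pos
    (HasGradientAt.hasDerivAt_comp_add_smul (by simpa using hg))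
  simp only [slope_def_field, one_smul, add_sub_cancel, zero_smul, add_zero, sub_zero,
    div_one] at hslope
  linarith

theorem le_add_inner_add_sq_of_lipschitz_gradient {f' : E → E} {L : ℝ}
    (hgrad : ∀ x, HasGradientAt f (f' x) x) (hlip : ∀ x y, ‖f' x - f' y‖ ≤ L * ‖x - y‖)
    (y z : E) :
    f z ≤ f y + inner ℝ (f' y) (z - y) + L / 2 * ‖z - y‖ ^ 2 := by
  set s := z - y
  set ψ : ℝ → ℝ := fun t => f (y + t • s) - t * inner ℝ (f' y) s - L * ‖s‖ ^ 2 * t ^ 2 / 2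
  have hψ : ∀ t, HasDerivAt ψ
      (inner ℝ (f' (y + t • s)) s - inner ℝ (f' y) s - L * ‖s‖ ^ 2 * t) t := by
    intro t
    have hsq : HasDerivAt (fun t : ℝ => L * ‖s‖ ^ 2 * t ^ 2 / 2) (L * ‖s‖ ^ 2 * t) t :=
      ((hasDerivAt_pow 2 t).const_mul _).div_const 2 |>.congr_deriv (by ring)
    exact (((hgrad _).hasDerivAt_comp_add_smul).sub
      ((hasDerivAt_id t).mul_const _ |>.congr_deriv (one_mul _))).sub hsq
  have hψ' : ∀ t ∈ interior (Icc (0 : ℝ) 1), deriv ψ t ≤ 0 := by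
    intro t ht
    rw [interior_Icc] at ht
    rw [(hψ t).deriv, sub_nonpos, ← inner_sub_left]
    calc inner ℝ (f' (y + t • s) - f' y) s
        ≤ ‖f' (y + t • s) - f' y‖ * ‖s‖ := real_inner_le_norm _ _
      _ ≤ L * ‖y + t • s - y‖ * ‖s‖ := by gcongr; exact hlip _ _
      _ = L * ‖s‖ ^ 2 * t := by
        rw [add_sub_cancel_left, norm_smul, Real.norm_of_nonneg ht.1.le]
        ring
  have hmono := (convex_Icc (0 : ℝ) 1).image_sub_le_mul_sub_of_deriv_le
    (fun t _ => (hψ t).continuousAt.continuousWithinAt)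
    (fun t _ => (hψ t).differentiableAt.differentiableWithinAt) hψ' 0
    (left_mem_Icc.2 zero_le_one) 1 (right_mem_Icc.2 zero_le_one) zero_le_one
  simp only [ψ, s, zero_smul, add_zero, one_smul, add_sub_cancel] at hmono
  linarith

end Gradient

section ProxGradStep

variable {E : Type*} [NormedAddCommGroup E] [InnerProductSpace ℝ E]

theorem ne_top_of_mem_epsSubdiff {g : E → EReal} {ε : ℝ} {u x : E} (hg : ProperFn g)
    (hu : u ∈ epsSubdiff g ε x) : g x ≠ ⊤ := by
  obtain ⟨z, hz⟩ := hg.1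
  intro hx
  have h := hu z
  rw [hx, EReal.top_add_coe, top_le_iff] at h
  exact hz h

theorem toReal_add_inner_sub_le_of_mem_epsSubdiff {g : E → EReal} {ε : ℝ} {u x z : E}
    (hg : ProperFn g) (hu : u ∈ epsSubdiff g ε x) (hz : g z ≠ ⊤) :
    (g x).toReal + inner ℝ u (z - x) - ε ≤ (g z).toReal := by
  have h := hu z
  rw [← EReal.coe_toReal (ne_top_of_mem_epsSubdiff hg hu) (hg.2 x),
    ← EReal.coe_toReal hz (hg.2 z), ← EReal.coe_add, EReal.coe_le_coe_iff] at h
  linarith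

theorem toReal_coe_add_le_of_mem_epsSubdiff [CompleteSpace E] {f : E → ℝ} {f' : E → E}
    {g : E → EReal} {L ε : ℝ} {v x y z : E} (hf : ConvexOn ℝ univ f)
    (hgrad : ∀ x, HasGradientAt f (f' x) x) (hlip : ∀ x y, ‖f' x - f' y‖ ≤ L * ‖x - y‖)
    (hg : ProperFn g) (hu : v - L • (x - y) - f' y ∈ epsSubdiff g ε x) (hz : g z ≠ ⊤) :
    ((f x : EReal) + g x).toReal
      ≤ ((f z : EReal) + g z).toReal + inner ℝ (v - L • (x - y)) (x - z)
        + (L / 2 * ‖x - y‖ ^ 2 + ε) := by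
  have hx := ne_top_of_mem_epsSubdiff hg hu
  rw [EReal.toReal_add (EReal.coe_ne_top _) (EReal.coe_ne_bot _) hx (hg.2 x),
    EReal.toReal_add (EReal.coe_ne_top _) (EReal.coe_ne_bot _) hz (hg.2 z), EReal.toReal_coe,
    EReal.toReal_coe]
  have hdescent := le_add_inner_add_sq_of_lipschitz_gradient hgrad hlip y x
  have hconvex := hf.add_inner_gradient_le (hgrad y) z
  have hsubgrad := toReal_add_inner_sub_le_of_mem_epsSubdiff hg hu hz
  have hinner : inner ℝ (f' y) (x - y) - inner ℝ (f' y) (z - y)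
      - inner ℝ (v - L • (x - y) - f' y) (z - x) = inner ℝ (v - L • (x - y)) (x - z) := by
    simp only [inner_sub_left, inner_sub_right]
    ring
  linarith

theorem inner_add_add_sq_nonpos_of_norm_smul_add_sq_le {α L ε : ℝ} {v s : E} (hα : 0 < α)
    (hL : 0 ≤ L) (h : ‖α • v + s‖ ^ 2 + 2 * α * ε ≤ ‖s‖ ^ 2) :
    inner ℝ (v - L • s) s + (L / 2 * ‖s‖ ^ 2 + ε)
      + α / (1 + α * L) / 2 * ‖v - L • s‖ ^ 2 ≤ 0 := by
  have hμ : 0 < 1 + α * L := by positivity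
  -- `α (v - L s) = u - (1 + α L) s` for the error vector `u = α v + s`
  have hidentity : 2 * α * (1 + α * L) * (inner ℝ (v - L • s) s + (L / 2 * ‖s‖ ^ 2 + ε)
      + α / (1 + α * L) / 2 * ‖v - L • s‖ ^ 2)
      = ‖α • v + s‖ ^ 2 + (1 + α * L) * (2 * α * ε - ‖s‖ ^ 2) := by
    rw [norm_add_sq_real, norm_sub_sq_real, norm_smul, norm_smul, inner_sub_left,
      real_inner_smul_left, real_inner_smul_left, real_inner_smul_right,
      real_inner_self_eq_norm_sq, Real.norm_of_nonneg hα.le, Real.norm_of_nonneg hL]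
    field_simp
    ring
  have hbound : ‖α • v + s‖ ^ 2 + (1 + α * L) * (2 * α * ε - ‖s‖ ^ 2) ≤ 0 := by
    nlinarith [mul_nonneg (mul_nonneg hα.le hL) (sq_nonneg ‖α • v + s‖)]
  nlinarith [mul_pos (mul_pos two_pos hα) hμ]

theorem energy_succ_le_of_inner_le {τ₀ τ₁ lam C F₀ F₁ Fz : ℝ} {w x x' xt xt' y z : E}
    (hτ : τ₀ ≤ τ₁) (hτ₁ : 0 ≤ τ₁) (hsq : (τ₁ - τ₀) ^ 2 = lam * τ₁)
    (hy : τ₁ • y = τ₀ • xt + (τ₁ - τ₀) • x) (hx' : x' = x - (τ₁ - τ₀) • w)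
    (hz : F₁ ≤ Fz + inner ℝ w (xt' - z) + C)
    (hprev : τ₀ * F₁ ≤ τ₀ * (F₀ + inner ℝ w (xt' - xt) + C))
    (hgap : inner ℝ w (xt' - y) + C + lam / 2 * ‖w‖ ^ 2 ≤ 0) :
    τ₁ * (F₁ - Fz) + ‖x' - z‖ ^ 2 / 2 ≤ τ₀ * (F₀ - Fz) + ‖x - z‖ ^ 2 / 2 := by
  have hnorm : ‖x' - z‖ ^ 2
      = ‖x - z‖ ^ 2 - 2 * (τ₁ - τ₀) * inner ℝ w (x - z) + lam * τ₁ * ‖w‖ ^ 2 := by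
    rw [hx', sub_right_comm, norm_sub_sq_real, real_inner_smul_right, norm_smul,
      Real.norm_eq_abs, mul_pow, sq_abs, hsq, real_inner_comm]
    ring
  have hyw : τ₁ * inner ℝ w y = τ₀ * inner ℝ w xt + (τ₁ - τ₀) * inner ℝ w x := by
    simpa only [inner_add_right, real_inner_smul_right] using congrArg (inner ℝ w) hy
  have hz' := mul_le_mul_of_nonneg_left hz (sub_nonneg.2 hτ)
  have hgap' := mul_nonpos_of_nonneg_of_nonpos hτ₁ hgap
  simp only [inner_sub_right] at hz' hprev hgap' hnorm ⊢
  linarith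

end ProxGradStep

def fistaNext (lam t : ℝ) : ℝ := t + (lam + √(lam ^ 2 + 4 * lam * t)) / 2

section FistaNext

variable {lam t : ℝ}

theorem self_le_fistaNext (hlam : 0 ≤ lam) : t ≤ fistaNext lam t := by
  unfold fistaNext
  linarith [Real.sqrt_nonneg (lam ^ 2 + 4 * lam * t)]

theorem fistaNext_sub_sq (hlam : 0 ≤ lam) (ht : 0 ≤ t) :
    (fistaNext lam t - t) ^ 2 = lam * fistaNext lam t := by
  have hroot := Real.sq_sqrt (show 0 ≤ lam ^ 2 + 4 * lam * t by positivity)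
  unfold fistaNext
  linear_combination hroot / 4

theorem mul_succ_sq_le_fistaNext (hlam : 0 ≤ lam) {k : ℝ}
    (ht : lam * k ^ 2 / 4 ≤ t) : lam * (k + 1) ^ 2 / 4 ≤ fistaNext lam t := by
  have hroot : lam * k ≤ √(lam ^ 2 + 4 * lam * t) := by
    apply Real.le_sqrt_of_sq_le
    nlinarith [mul_le_mul_of_nonneg_left ht hlam]
  unfold fistaNext
  nlinarith

theorem mul_sq_le_of_fistaNext {τ : ℕ → ℝ} (hlam : 0 ≤ lam) (h₀ : τ 0 = 0)
    (hsucc : ∀ k, τ (k + 1) = fistaNext lam (τ k)) (k : ℕ) : lam * k ^ 2 / 4 ≤ τ k := by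
  induction k with
  | zero => simp [h₀]
  | succ k ih =>
    rw [hsucc, Nat.cast_succ]
    exact mul_succ_sq_le_fistaNext hlam ih

end FistaNext

structure IsIEFISTA {E : Type*} [NormedAddCommGroup E] [InnerProductSpace ℝ E]
    (L α σ : ℝ) (f' : E → E) (g : E → EReal) (x xt y v : ℕ → E) (ε τ : ℕ → ℝ) : Prop where
  tau_zero : τ 0 = 0
  tau_succ : ∀ k, τ (k + 1) = fistaNext (α / (1 + α * L)) (τ k)
  y_eq : ∀ k, y k = (τ k / τ (k + 1)) • xt k + ((τ (k + 1) - τ k) / τ (k + 1)) • x k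
  mem_epsSubdiff : ∀ k,
    v (k + 1) - L • (xt (k + 1) - y k) - f' (y k) ∈ epsSubdiff g (ε (k + 1)) (xt (k + 1))
  error_le : ∀ k, ‖α • v (k + 1) + xt (k + 1) - y k‖ ^ 2 + 2 * α * ε (k + 1)
    ≤ σ ^ 2 * ‖xt (k + 1) - y k‖ ^ 2
  x_succ : ∀ k, x (k + 1) = x k - (τ (k + 1) - τ k) • (v (k + 1) + L • (y k - xt (k + 1)))

namespace IsIEFISTA

variable {E : Type*} [NormedAddCommGroup E] [InnerProductSpace ℝ E]
  {L α σ : ℝ} {f : E → ℝ} {f' : E → E} {g : E → EReal} {x xt y v : ℕ → E} {ε τ : ℕ → ℝ}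

theorem mul_sq_le_tau (h : IsIEFISTA L α σ f' g x xt y v ε τ) (hL : 0 < L) (hα : 0 < α)
    (k : ℕ) : α / (1 + α * L) * k ^ 2 / 4 ≤ τ k :=
  mul_sq_le_of_fistaNext (by positivity) h.tau_zero h.tau_succ k

theorem energy_succ_le [CompleteSpace E] (h : IsIEFISTA L α σ f' g x xt y v ε τ) (hL : 0 < L)
    (hα : 0 < α) (hσ : σ ^ 2 ≤ 1) (hf : ConvexOn ℝ univ f)
    (hgrad : ∀ x, HasGradientAt f (f' x) x) (hlip : ∀ x y, ‖f' x - f' y‖ ≤ L * ‖x - y‖)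
    (hg : ProperFn g) {z : E} (hz : g z ≠ ⊤) (k : ℕ) :
    τ (k + 1) * (((f (xt (k + 1)) : EReal) + g (xt (k + 1))).toReal
        - ((f z : EReal) + g z).toReal) + ‖x (k + 1) - z‖ ^ 2 / 2
      ≤ τ k * (((f (xt k) : EReal) + g (xt k)).toReal - ((f z : EReal) + g z).toReal)
        + ‖x k - z‖ ^ 2 / 2 := by
  have hlam : 0 ≤ α / (1 + α * L) := by positivity
  have hτ : 0 ≤ τ k := le_trans (by positivity) (h.mul_sq_le_tau hL hα k)
  have hτ₁ : 0 < τ (k + 1) := lt_of_lt_of_le (by positivity) (h.mul_sq_le_tau hL hα (k + 1))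
  have hobj := fun {u} (hu : g u ≠ ⊤) ↦
    toReal_coe_add_le_of_mem_epsSubdiff hf hgrad hlip hg (h.mem_epsSubdiff k) hu
  refine energy_succ_le_of_inner_le (lam := α / (1 + α * L)) (xt := xt k) (y := y k)
    ?_ hτ₁.le ?_ ?_ ?_ (hobj hz) ?_ ?_
  · rw [h.tau_succ]
    exact self_le_fistaNext hlam
  · rw [h.tau_succ]
    exact fistaNext_sub_sq hlam hτ
  · rw [h.y_eq k, smul_add, smul_smul, smul_smul, mul_div_cancel₀ _ hτ₁.ne',
      mul_div_cancel₀ _ hτ₁.ne']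
  · rw [h.x_succ k, ← neg_sub (xt (k + 1)), smul_neg, ← sub_eq_add_neg]
  -- `F (x̃ 0)` may be infinite (so junk after `toReal`), but it is weighted by `τ 0 = 0`
  · rcases k with _ | k
    · simp [h.tau_zero]
    · exact mul_le_mul_of_nonneg_left
        (hobj (ne_top_of_mem_epsSubdiff hg (h.mem_epsSubdiff k))) hτ
  · have herr : ‖α • v (k + 1) + (xt (k + 1) - y k)‖ ^ 2 + 2 * α * ε (k + 1)
        ≤ ‖xt (k + 1) - y k‖ ^ 2 := by
      rw [← add_sub_assoc]
      exact (h.error_le k).trans (mul_le_of_le_one_left (sq_nonneg _) hσ)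
    exact inner_add_add_sq_nonpos_of_norm_smul_add_sq_le hα hL.le herr

theorem energy_le [CompleteSpace E] (h : IsIEFISTA L α σ f' g x xt y v ε τ) (hL : 0 < L)
    (hα : 0 < α) (hσ : σ ^ 2 ≤ 1) (hf : ConvexOn ℝ univ f)
    (hgrad : ∀ x, HasGradientAt f (f' x) x) (hlip : ∀ x y, ‖f' x - f' y‖ ≤ L * ‖x - y‖)
    (hg : ProperFn g) {z : E} (hz : g z ≠ ⊤) (k : ℕ) :
    τ k * (((f (xt k) : EReal) + g (xt k)).toReal - ((f z : EReal) + g z).toReal)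
      + ‖x k - z‖ ^ 2 / 2 ≤ ‖x 0 - z‖ ^ 2 / 2 := by
  induction k with
  | zero => simp [h.tau_zero]
  | succ k ih => exact (h.energy_succ_le hL hα hσ hf hgrad hlip hg hz k).trans ih

theorem gap_le [CompleteSpace E] (h : IsIEFISTA L α σ f' g x xt y v ε τ) (hL : 0 < L)
    (hα : 0 < α) (hσ : σ ^ 2 ≤ 1) (hf : ConvexOn ℝ univ f)
    (hgrad : ∀ x, HasGradientAt f (f' x) x) (hlip : ∀ x y, ‖f' x - f' y‖ ≤ L * ‖x - y‖)
    (hg : ProperFn g) {z : E} (hz : g z ≠ ⊤) {k : ℕ} (hk : 1 ≤ k) :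
    ((f (xt k) : EReal) + g (xt k)).toReal - ((f z : EReal) + g z).toReal
      ≤ 2 * (1 + α * L) / (α * (k : ℝ) ^ 2) * ‖x 0 - z‖ ^ 2 := by
  set gap := ((f (xt k) : EReal) + g (xt k)).toReal - ((f z : EReal) + g z).toReal
  have hk2 : (0 : ℝ) < (k : ℝ) ^ 2 := by positivity
  have hμ : 0 < 1 + α * L := by positivity
  rcases le_or_gt gap 0 with hneg | hpos
  · exact hneg.trans (by positivity)
  have henergy := h.energy_le hL hα hσ hf hgrad hlip hg hz k
  have hτ : α * k ^ 2 ≤ 4 * (1 + α * L) * τ k := by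
    have := h.mul_sq_le_tau hL hα k
    rw [div_mul_eq_mul_div, div_div, div_le_iff₀ (by positivity)] at this
    linarith
  rw [div_mul_eq_mul_div, le_div_iff₀ (by positivity)]
  nlinarith [mul_le_mul_of_nonneg_right hτ hpos.le, mul_le_mul_of_nonneg_left henergy hμ.le,
    mul_nonneg hμ.le (sq_nonneg ‖x k - z‖)]

end IsIEFISTA

theorem le_mul_infDist_sq {X : Type*} [PseudoMetricSpace X] {s : Set X} {x : X} {a c : ℝ}
    (hs : s.Nonempty) (hc : 0 < c) (h : ∀ z ∈ s, a ≤ c * dist x z ^ 2) :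
    a ≤ c * infDist x s ^ 2 := by
  by_contra! hlt
  have hroot : infDist x s < √(a / c) := by
    rw [Real.lt_sqrt infDist_nonneg, lt_div_iff₀ hc]
    linarith
  obtain ⟨z, hz, hdist⟩ := (infDist_lt_iff hs).1 hroot
  rw [Real.lt_sqrt dist_nonneg, lt_div_iff₀ hc] at hdist
  linarith [h z hz]

theorem IEFISTA_rate_general {E : Type*} [NormedAddCommGroup E] [InnerProductSpace ℝ E]
    [FiniteDimensional ℝ E]
    (L α σ : ℝ) (hL : 0 < L) (hα : 1 / L < α) (hσ : 0 ≤ σ ∧ σ < 1)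
    (f : E → ℝ) (f' : E → E) (hfconv : ConvexOn ℝ Set.univ f)
    (hgrad : ∀ x : E, HasGradientAt f (f' x) x)
    (hlip : ∀ x y : E, ‖f' x - f' y‖ ≤ L * ‖x - y‖)
    (g : E → EReal) (hgp : ProperFn g)
    (x xt y v : ℕ → E) (ε τs : ℕ → ℝ)
    (hτ0 : τs 0 = 0)
    (hτrec : ∀ k : ℕ, τs (k + 1) = τs k
        + (α / (1 + α * L)
          + Real.sqrt ((α / (1 + α * L)) ^ 2 + 4 * (α / (1 + α * L)) * τs k)) / 2)
    (hyrec : ∀ k : ℕ, y k = (τs k / τs (k + 1)) • xt k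
        + ((τs (k + 1) - τs k) / τs (k + 1)) • x k)
    (hincl : ∀ k : ℕ,
        v (k + 1) - L • (xt (k + 1) - y k) - f' (y k) ∈ epsSubdiff g (ε (k + 1)) (xt (k + 1)))
    (herr : ∀ k : ℕ,
        ‖α • v (k + 1) + xt (k + 1) - y k‖ ^ 2 + 2 * α * ε (k + 1)
          ≤ σ ^ 2 * ‖xt (k + 1) - y k‖ ^ 2)
    (hxrec : ∀ k : ℕ,
        x (k + 1) = x k - (τs (k + 1) - τs k) • (v (k + 1) + L • (y k - xt (k + 1))))
    (Sstar : Set E) (Fstar : ℝ)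
    (hSne : Sstar.Nonempty)
    (hFs : ∀ z ∈ Sstar, (f z : EReal) + g z = (Fstar : EReal)) :
    ∀ k : ℕ, 1 ≤ k →
      ((f (xt k) : EReal) + g (xt k)).toReal - Fstar
        ≤ 2 * (1 + α * L) / (α * (k : ℝ) ^ 2) * (Metric.infDist (x 0) Sstar) ^ 2 := by
  have hα₀ : 0 < α := (one_div_pos.2 hL).trans hα
  have hσ₁ : σ ^ 2 ≤ 1 := pow_le_one₀ hσ.1 hσ.2.le
  have hIE : IsIEFISTA L α σ f' g x xt y v ε τs := ⟨hτ0, hτrec, hyrec, hincl, herr, hxrec⟩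
  intro k hk
  refine le_mul_infDist_sq hSne (by positivity) fun z hz => ?_
  have hgz : g z ≠ ⊤ := fun htop => by simpa [htop] using hFs z hz
  rw [← EReal.toReal_coe Fstar, ← hFs z hz, dist_eq_norm]
  exact hIE.gap_le hL hα₀ hσ₁ hfconv hgrad hlip hgp hgz hk

/-- Optimal convergence rate of IE-FISTA:
`F(x̃ k) - F* ≤ 2(1 + αL) d₀² / (α k²)` for all `k ≥ 1`. -/
theorem IEFISTA_rate {E : Type*} [NormedAddCommGroup E] [InnerProductSpace ℝ E]
    [FiniteDimensional ℝ E]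
    (L α σ : ℝ) (hL : 0 < L) (hα : 1 / L < α) (hσ : 0 ≤ σ ∧ σ < 1)
    (f : E → ℝ) (f' : E → E) (hfconv : ConvexOn ℝ Set.univ f)
    (hgrad : ∀ x : E, HasGradientAt f (f' x) x)
    (hlip : ∀ x y : E, ‖f' x - f' y‖ ≤ L * ‖x - y‖)
    (g : E → EReal) (hgp : ProperFn g) (hglsc : LowerSemicontinuous g) (hgconv : ConvexFn g)
    (x xt y v : ℕ → E) (ε τs : ℕ → ℝ)
    (hτ0 : τs 0 = 0) (hxt0 : xt 0 = x 0)
    (hτrec : ∀ k : ℕ, τs (k + 1) = τs k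
        + (α / (1 + α * L)
          + Real.sqrt ((α / (1 + α * L)) ^ 2 + 4 * (α / (1 + α * L)) * τs k)) / 2)
    (hyrec : ∀ k : ℕ, y k = (τs k / τs (k + 1)) • xt k
        + ((τs (k + 1) - τs k) / τs (k + 1)) • x k)
    (hεk : ∀ k : ℕ, 0 ≤ ε (k + 1))
    (hincl : ∀ k : ℕ,
        v (k + 1) - L • (xt (k + 1) - y k) - f' (y k) ∈ epsSubdiff g (ε (k + 1)) (xt (k + 1)))
    (herr : ∀ k : ℕ,
        ‖α • v (k + 1) + xt (k + 1) - y k‖ ^ 2 + 2 * α * ε (k + 1)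
          ≤ σ ^ 2 * ‖xt (k + 1) - y k‖ ^ 2)
    (hxrec : ∀ k : ℕ,
        x (k + 1) = x k - (τs (k + 1) - τs k) • (v (k + 1) + L • (y k - xt (k + 1))))
    (Sstar : Set E) (Fstar : ℝ)
    (hS : Sstar = {z : E | ∀ w : E, (f z : EReal) + g z ≤ (f w : EReal) + g w})
    (hSne : Sstar.Nonempty)
    (hFs : ∀ z ∈ Sstar, (f z : EReal) + g z = (Fstar : EReal))
    (hfin : ∀ k : ℕ, 1 ≤ k → g (xt k) ≠ ⊤) :
    ∀ k : ℕ, 1 ≤ k →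
      ((f (xt k) : EReal) + g (xt k)).toReal - Fstar
        ≤ 2 * (1 + α * L) / (α * (k : ℝ) ^ 2) * (Metric.infDist (x 0) Sstar) ^ 2 :=
  IEFISTA_rate_general L α σ hL hα hσ f f' hfconv hgrad hlip g hgp x xt y v ε τs hτ0 hτrec hyrec
    hincl herr hxrec Sstar Fstar hSne hFs
end
end
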